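/- Let P be in uniform decent ntyft format and σ a closed substitution. Then the set of rules obtained by applying σ to all rules of R with conclusion of the form f(x⃗_f) →a u coincides, up to changing targets and right-hand sides of premises, with the set of closed substitution instances of rules of R whose conclusion has source σ(f(x⃗_f)) and label a. -/
import Mathlib


inductive Tm (F : Type) (ar : F → ℕ) (V : Type) : Type where
  | var : V → Tm F ar V
  | app : (f : F) → (Fin (ar f) → Tm F ar V) → Tm F ar V

variable {F V A : Type} {ar : F → ℕ}

def varsTm : Tm F ar V → Set V
  | .var x => {x}
  | .app _ ts => ⋃ i, varsTm (ts i)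

def symsTm : Tm F ar V → Set F
  | .var _ => ∅
  | .app f ts => {f} ∪ ⋃ i, symsTm (ts i)

def ClosedTm (t : Tm F ar V) : Prop := varsTm t = ∅

def subTm (σ : V → Tm F ar V) : Tm F ar V → Tm F ar V
  | .var x => σ x
  | .app f ts => .app f (fun i => subTm σ (ts i))

inductive Lit (F : Type) (ar : F → ℕ) (V A : Type) : Type where
  | pos : Tm F ar V → A → Tm F ar V → Lit F ar V A
  | neg : Tm F ar V → A → Lit F ar V A

def Lit.lhs : Lit F ar V A → Tm F ar V
  | .pos t _ _ => t
  | .neg t _ => t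

def Lit.isNeg : Lit F ar V A → Prop
  | .pos _ _ _ => False
  | .neg _ _ => True

def ClosedLit : Lit F ar V A → Prop
  | .pos t _ t' => ClosedTm t ∧ ClosedTm t'
  | .neg t _ => ClosedTm t

def varsLit : Lit F ar V A → Set V
  | .pos t _ t' => varsTm t ∪ varsTm t'
  | .neg t _ => varsTm t

def symsLit : Lit F ar V A → Set F
  | .pos t _ t' => symsTm t ∪ symsTm t'
  | .neg t _ => symsTm t

def Denies : Lit F ar V A → Lit F ar V A → Prop
  | .pos t a _, .neg u b => t = u ∧ a = b
  | .neg t a, .pos u b _ => t = u ∧ a = b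
  | .pos _ _ _, .pos _ _ _ => False
  | .neg _ _, .neg _ _ => False

def subLit (σ : V → Tm F ar V) : Lit F ar V A → Lit F ar V A
  | .pos t a t' => .pos (subTm σ t) a (subTm σ t')
  | .neg t a => .neg (subTm σ t) a

structure Rule (F : Type) (ar : F → ℕ) (V A : Type) : Type where
  prem : Set (Lit F ar V A)
  concl : Lit F ar V A

def Rule.source (r : Rule F ar V A) : Tm F ar V := r.concl.lhs

def Rule.vars (r : Rule F ar V A) : Set V := varsLit r.concl ∪ ⋃ l ∈ r.prem, varsLit l

def Rule.syms (r : Rule F ar V A) : Set F := symsLit r.concl ∪ ⋃ l ∈ r.prem, symsLit l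

def subRule (σ : V → Tm F ar V) (r : Rule F ar V A) : Rule F ar V A :=
  ⟨subLit σ '' r.prem, subLit σ r.concl⟩

/-- the right-hand side variables of the positive literals in `H` -/
def rhsVars (H : Set (Lit F ar V A)) : Set V := {y | ∃ t a, Lit.pos t a (.var y) ∈ H}

/-- the variables occurring in left-hand sides of literals in `H` -/
def lhsVars (H : Set (Lit F ar V A)) : Set V := ⋃ l ∈ H, varsTm l.lhs

structure IsNtytt (r : Rule F ar V A) : Prop where
  rhs_var : ∀ {t : Tm F ar V} {a : A} {t' : Tm F ar V},
    Lit.pos t a t' ∈ r.prem → ∃ y : V, t' = Tm.var y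
  rhs_distinct : ∀ {t u : Tm F ar V} {a b : A} {y : V},
    Lit.pos t a (.var y) ∈ r.prem → Lit.pos u b (.var y) ∈ r.prem → t = u ∧ a = b
  rhs_fresh : ∀ {t : Tm F ar V} {a : A} {y : V},
    Lit.pos t a (.var y) ∈ r.prem → y ∉ varsTm r.source

def NoLookahead (r : Rule F ar V A) : Prop :=
  ∀ y ∈ rhsVars r.prem, y ∉ lhsVars r.prem

def NoFreeVars (r : Rule F ar V A) : Prop :=
  ∀ x ∈ r.vars, x ∈ varsTm r.source ∨ x ∈ rhsVars r.prem

def Decent (r : Rule F ar V A) : Prop := NoLookahead r ∧ NoFreeVars r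

/-- the source is of the form `f(x₁,…,x_{ar f})` with distinct variables -/
def NtyftSource (r : Rule F ar V A) : Prop :=
  ∃ (f : F) (xs : Fin (ar f) → V), Function.Injective xs ∧
    r.source = Tm.app f (fun i => Tm.var (xs i))

/-- decent xynft rule: decent ntyft rule whose positive premises have variables as
left-hand sides -/
def DecentXynft (r : Rule F ar V A) : Prop :=
  IsNtytt r ∧ Decent r ∧ NtyftSource r ∧
    ∀ {t : Tm F ar V} {a : A} {t' : Tm F ar V},
      Lit.pos t a t' ∈ r.prem → ∃ x : V, t = Tm.var x

/-- `Proves R H α` : the transition rule `H/α` is provable from the TSS `R`,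
i.e. there is a well-founded proof tree with root `α` whose hypotheses are included in `H`. -/
inductive Proves (R : Set (Rule F ar V A)) : Set (Lit F ar V A) → Lit F ar V A → Prop where
  | hyp {H : Set (Lit F ar V A)} {α : Lit F ar V A} : α ∈ H → Proves R H α
  | step {H : Set (Lit F ar V A)} (r : Rule F ar V A) (σ : V → Tm F ar V) :
      r ∈ R → (∀ β ∈ r.prem, Proves R H (subLit σ β)) → Proves R H (subLit σ r.concl)

/-- `IProves R H α` : the transition rule `H/α` is irredundantly provable from `R`:
there is a proof tree with root `α` whose set of hypotheses is exactly `H`. -/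
inductive IProves (R : Set (Rule F ar V A)) : Set (Lit F ar V A) → Lit F ar V A → Prop where
  | hyp (α : Lit F ar V A) : IProves R {α} α
  | step (r : Rule F ar V A) (σ : V → Tm F ar V) (K : Lit F ar V A → Set (Lit F ar V A)) :
      r ∈ R → (∀ β ∈ r.prem, IProves R (K β) (subLit σ β)) →
      IProves R (⋃ β ∈ r.prem, K β) (subLit σ r.concl)

/-- Well-supported provability of a closed literal. -/
inductive WS (R : Set (Rule F ar V A)) : Lit F ar V A → Prop where
  | step (r : Rule F ar V A) (σ : V → Tm F ar V) :
      r ∈ R → (∀ x, ClosedTm (σ x)) →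
      (∀ β ∈ r.prem, WS R (subLit σ β)) → WS R (subLit σ r.concl)
  | neg (t : Tm F ar V) (a : A)
      (δ : Set (Lit F ar V A) → Tm F ar V → Lit F ar V A) :
      ClosedTm t →
      (∀ (N : Set (Lit F ar V A)) (t' : Tm F ar V),
        (∀ β ∈ N, β.isNeg ∧ ClosedLit β) → ClosedTm t' →
        Proves R N (.pos t a t') →
        WS R (δ N t')) →
      (∀ (N : Set (Lit F ar V A)) (t' : Tm F ar V),
        (∀ β ∈ N, β.isNeg ∧ ClosedLit β) → ClosedTm t' →
        Proves R N (.pos t a t') →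
        ∃ β ∈ N, Denies (δ N t') β) →
      WS R (.neg t a)

/-- Two literals agree up to their right-hand side (target). -/
def LitApprox {F V A : Type} {ar : F → ℕ} : Lit F ar V A → Lit F ar V A → Prop
  | .pos t a _, .pos u b _ => t = u ∧ a = b
  | .neg t a, .neg u b => t = u ∧ a = b
  | .pos _ _ _, .neg _ _ => False
  | .neg _ _, .pos _ _ _ => False

/-- Two rules differ only in their targets and the right-hand sides of their premises. -/
def RuleApprox {F V A : Type} {ar : F → ℕ} (r r' : Rule F ar V A) : Prop :=
  LitApprox r.concl r'.concl ∧
    (∀ l ∈ r.prem, ∃ l' ∈ r'.prem, LitApprox l l') ∧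
    (∀ l' ∈ r'.prem, ∃ l ∈ r.prem, LitApprox l l')

/-- `R ≈ R'` setwise. -/
def SetApprox {F V A : Type} {ar : F → ℕ} (R R' : Set (Rule F ar V A)) : Prop :=
  (∀ r ∈ R, ∃ r' ∈ R', RuleApprox r r') ∧ (∀ r' ∈ R', ∃ r ∈ R, RuleApprox r r')

/-- closed substitution instances of rules of `R` -/
def clRules {F V A : Type} {ar : F → ℕ} (R : Set (Rule F ar V A)) : Set (Rule F ar V A) :=
  {r' | ∃ r ∈ R, ∃ σ : V → Tm F ar V, (∀ x, ClosedTm (σ x)) ∧ r' = subRule σ r}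

/-- `R ↾ (t →a)` : the rules of `R` whose conclusion has source `t` and label `a`. -/
def restr {F V A : Type} {ar : F → ℕ} (R : Set (Rule F ar V A)) (t : Tm F ar V) (a : A) :
    Set (Rule F ar V A) :=
  {r | r ∈ R ∧ ∃ u : Tm F ar V, r.concl = Lit.pos t a u}

lemma subTm_congr (σ τ : V → Tm F ar V) :
    ∀ t : Tm F ar V, (∀ x ∈ varsTm t, σ x = τ x) → subTm σ t = subTm τ t
  | .var x, h => h x rfl
  | .app f ts, h => by
      simp only [subTm, Tm.app.injEq, heq_eq_eq, true_and]
      funext i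
      exact subTm_congr σ τ (ts i) fun x hx => h x (Set.mem_iUnion.2 ⟨i, hx⟩)

lemma litApprox_refl (l : Lit F ar V A) : LitApprox l l := by
  cases l <;> simp [LitApprox]

lemma ruleApprox_refl (r : Rule F ar V A) : RuleApprox r r :=
  ⟨litApprox_refl _, fun l hl => ⟨l, hl, litApprox_refl l⟩,
    fun l hl => ⟨l, hl, litApprox_refl l⟩⟩

lemma varsTm_lhs_subset (l : Lit F ar V A) : varsTm l.lhs ⊆ varsLit l := by
  cases l with
  | pos t a t' => exact Set.subset_union_left
  | neg t a => exact subset_rfl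

/-- for a TSS in uniform decent ntyft format and a closed substitution σ,
σ applied to the rules with conclusion `f(x⃗_f) →a _` yields, up to targets and
right-hand sides of premises, exactly the closed substitution instances of rules whose
conclusion has source `σ(f(x⃗_f))` and label `a`. -/
theorem uniform_instances_approx (F V A : Type) (ar : F → ℕ)
    (R : Set (Rule F ar V A)) (xf : (g : F) → Fin (ar g) → V)
    (hinj : ∀ g : F, Function.Injective (xf g))
    (huni : ∀ r ∈ R, ∃ g : F, r.source = Tm.app g (fun i => Tm.var (xf g i)))
    (hnt : ∀ r ∈ R, IsNtytt r) (hdec : ∀ r ∈ R, Decent r)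
    (f : F) (a : A) (σ : V → Tm F ar V) (hσ : ∀ x, ClosedTm (σ x)) :
    SetApprox (subRule σ '' restr R (Tm.app f (fun i => Tm.var (xf f i))) a)
      (restr (clRules R) (subTm σ (Tm.app f (fun i => Tm.var (xf f i)))) a) := by
  constructor
  · rintro r' ⟨r, ⟨hrR, u, hconcl⟩, rfl⟩
    refine ⟨subRule σ r, ⟨⟨r, hrR, σ, hσ, rfl⟩, subTm σ u, ?_⟩, ruleApprox_refl _⟩
    simp [subRule, hconcl, subLit, subTm]
  · rintro r' ⟨⟨r, hrR, τ, hτ, rfl⟩, u, hconcl⟩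
    obtain ⟨g, hsrc⟩ := huni r hrR
    obtain ⟨prem, concl⟩ := r
    cases concl with
    | neg t b => simp [subRule, subLit] at hconcl
    | pos t b u₀ =>
      have ht : t = Tm.app g (fun i => Tm.var (xf g i)) := hsrc
      subst ht
      simp only [subRule, subLit, subTm, Lit.pos.injEq] at hconcl
      obtain ⟨h1, h2, h3⟩ := hconcl
      subst h2
      obtain ⟨hgf, hfun⟩ := Tm.app.inj h1
      subst hgf
      have hfun' : ∀ i, τ (xf g i) = σ (xf g i) := fun i => congrFun (eq_of_heq hfun) i
      -- agreement of σ and τ on variables of the source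
      have hagree : ∀ x ∈ varsTm (Tm.app g (fun i => Tm.var (xf g i)) : Tm F ar V),
          σ x = τ x := by
        intro x hx
        simp only [varsTm, Set.mem_iUnion, Set.mem_singleton_iff] at hx
        obtain ⟨i, rfl⟩ := hx
        exact (hfun' i).symm
      have hdr := hdec _ hrR
      have hlhs : ∀ β ∈ prem, ∀ x ∈ varsTm β.lhs, σ x = τ x := by
        intro β hβ x hx
        have hxv : x ∈ Rule.vars ⟨prem, Lit.pos (Tm.app g fun i => Tm.var (xf g i)) b u₀⟩ :=
          Or.inr (Set.mem_biUnion hβ (varsTm_lhs_subset β hx))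
        rcases hdr.2 x hxv with h | h
        · exact hagree x h
        · exact absurd (Set.mem_biUnion hβ hx) (hdr.1 x h)
      refine ⟨subRule σ ⟨prem, Lit.pos (Tm.app g fun i => Tm.var (xf g i)) b u₀⟩,
        ⟨⟨prem, _⟩, ⟨hrR, u₀, rfl⟩, rfl⟩, ?_, ?_, ?_⟩
      · -- conclusions approx
        exact ⟨subTm_congr σ τ _ hagree, rfl⟩
      · rintro l ⟨β, hβ, rfl⟩
        refine ⟨subLit τ β, ⟨β, hβ, rfl⟩, ?_⟩
        cases β with
        | pos s c s' => exact ⟨subTm_congr σ τ s (hlhs _ hβ), rfl⟩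
        | neg s c => exact ⟨subTm_congr σ τ s (hlhs _ hβ), rfl⟩
      · rintro l ⟨β, hβ, rfl⟩
        refine ⟨subLit σ β, ⟨β, hβ, rfl⟩, ?_⟩
        cases β with
        | pos s c s' => exact ⟨subTm_congr σ τ s (hlhs _ hβ), rfl⟩
        | neg s c => exact ⟨subTm_congr σ τ s (hlhs _ hβ), rfl⟩
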